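/- Let α, β, γ be pairwise orthonormal vectors in ℝ⁸. Then for all u, v, w orthogonal to α: (ι_γ τ_α)(u,v,w) = [(ι_γ ι_β Ψ₀)∧β^# + ι_γ τ_β](u,v,w); that is, Im Ω_{αγ} = ω_{βγ}∧β^# + Im Ω_{βγ} on α⊥ (Proposition 14(ii)), so the Calabi–Yau structures of X_{αγ} and X_{βγ} determine each other via Ψ₀. -/
import Mathlib


open scoped RealInnerProductSpace

noncomputable section

/-- `W8` is ℝ⁸ with its Euclidean inner product. -/
abbrev W8 : Type := EuclideanSpace ℝ (Fin 8)

/-- Evaluation of the wedge product `eⁱ ∧ eʲ ∧ eᵏ ∧ eˡ` of dual basis 1-forms of ℝ⁸. -/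
def e4 (i j k l : Fin 8) (u v w z : W8) : ℝ :=
  Matrix.det !![u i, u j, u k, u l; v i, v j, v k, v l;
                w i, w j, w k, w l; z i, z j, z k, z l]

/-- The standard Spin(7) 4-form Ψ₀ = e¹²³⁴+e⁵⁶⁷⁸+e¹²⁵⁶−e¹²⁷⁸−e³⁴⁵⁶+e³⁴⁷⁸
+e¹³⁵⁷+e¹³⁶⁸+e²⁴⁵⁷+e²⁴⁶⁸+e¹⁴⁵⁸−e¹⁴⁶⁷−e²³⁵⁸+e²³⁶⁷ (0-indexed). -/
def Psi0 (u v w z : W8) : ℝ :=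
  e4 0 1 2 3 u v w z + e4 4 5 6 7 u v w z + e4 0 1 4 5 u v w z - e4 0 1 6 7 u v w z
    - e4 2 3 4 5 u v w z + e4 2 3 6 7 u v w z + e4 0 2 4 6 u v w z + e4 0 2 5 7 u v w z
    + e4 1 3 4 6 u v w z + e4 1 3 5 7 u v w z + e4 0 3 4 7 u v w z - e4 0 3 5 6 u v w z
    - e4 1 2 4 7 u v w z + e4 1 2 5 6 u v w z

/-- The dual 1-form γ^# = ⟨γ,·⟩ of a vector γ ∈ ℝ⁸. -/
def sharpW (γ : W8) : W8 → ℝ := fun a => ⟪γ, a⟫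

/-- Pointwise evaluation of the wedge (1-form) ∧ (3-form) on four vectors of ℝ⁸. -/
def wedge13W (f : W8 → ℝ) (C : W8 → W8 → W8 → ℝ) (a b c d : W8) : ℝ :=
  f a * C b c d - f b * C a c d + f c * C a b d - f d * C a b c

/-- For a unit vector γ, τ_γ = γ^# ∧ (ι_γΨ₀) − Ψ₀ is the 4-form representing the Hodge
dual ∗₇φ_γ of the induced G₂ form φ_γ = ι_γΨ₀ within the hyperplane γ⊥. -/
def tau (γ : W8) (a b c d : W8) : ℝ :=
  wedge13W (sharpW γ) (fun x y z => Psi0 γ x y z) a b c d - Psi0 a b c d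

/-- Pointwise evaluation of the wedge (2-form) ∧ (1-form) on three vectors of ℝ⁸. -/
def wedge21W (A : W8 → W8 → ℝ) (f : W8 → ℝ) (a b c : W8) : ℝ :=
  A a b * f c - A a c * f b + A b c * f a

/-- Proposition 14(ii): for pairwise orthonormal α, β, γ in ℝ⁸ and u, v, w ⊥ α,
Im Ω_{αγ} = ω_{βγ} ∧ β^# + Im Ω_{βγ}, i.e.
(ι_γτ_α)(u,v,w) = [(ι_γι_βΨ₀) ∧ β^# + ι_γτ_β](u,v,w). -/
theorem prop14_ImOmega_relation
    (α β γ : W8) (hα : ‖α‖ = 1) (hβ : ‖β‖ = 1) (hγ : ‖γ‖ = 1)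
    (hαβ : ⟪α, β⟫ = (0 : ℝ)) (hαγ : ⟪α, γ⟫ = (0 : ℝ)) (hβγ : ⟪β, γ⟫ = (0 : ℝ))
    (u v w : W8) (hu : ⟪α, u⟫ = (0 : ℝ)) (hv : ⟪α, v⟫ = (0 : ℝ)) (hw : ⟪α, w⟫ = (0 : ℝ)) :
    tau α γ u v w =
      wedge21W (fun a b => Psi0 β γ a b) (sharpW β) u v w + tau β γ u v w := by
  simp only [tau, wedge13W, wedge21W, sharpW, hαγ, hβγ, hu, hv, hw]
  ring
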